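/- arXiv:2506.11704 — 2 statements merged into one kernel-verified Lean document; each statement's English description precedes it below -/
import Mathlib

section
/- Let n ≥ 8, let k be an integer with 0 ≤ k ≤ n−7, and set m = ⌊(n−k−3)/2⌋. For i ∈ {0,1}, let T_i(k) be the tree obtained from a path with k+3−i vertices by attaching m pendant leaves to each of its two endpoints, and let T(k) be the tree obtained from T_1(k) by attaching m further pendant leaves to one leaf of T_1(k). Then T(k) is a k-isometric-universal tree for {T_0(k), T_1(k)}, and every tree that is k-isometric-universal for {T_0(k), T_1(k)} has at least |V(T_1(k))| + m vertices; in particular T(k) is a minimum k-isometric-universal tree for this pair. -/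
open SimpleGraph

/-- `φ` realizes `G` as a `k`-isometric subgraph of `U`: it is injective, maps edges to
edges, and preserves every distance whose value in `U` is at most `k` (distances take
the value `⊤` between vertices in different connected components). -/
def IsKIsometricEmbedding (k : ℕ) {V W : Type} (G : SimpleGraph V) (U : SimpleGraph W)
    (φ : V → W) : Prop :=
  Function.Injective φ ∧
  (∀ u v : V, G.Adj u v → U.Adj (φ u) (φ v)) ∧
  ∀ u v : V, U.edist (φ u) (φ v) ≤ (k : ℕ∞) → G.edist u v = U.edist (φ u) (φ v)

/-- `U` is a `k`-isometric-universal graph for the pair `{G₁, G₂}`: both `G₁` and `G₂`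
are isomorphic to `k`-isometric subgraphs of `U`. -/
def IsKIsoUniversalPair (k : ℕ) {V₁ V₂ W : Type} (G₁ : SimpleGraph V₁)
    (G₂ : SimpleGraph V₂) (U : SimpleGraph W) : Prop :=
  (∃ φ : V₁ → W, IsKIsometricEmbedding k G₁ U φ) ∧
  (∃ φ : V₂ → W, IsKIsometricEmbedding k G₂ U φ)

/-- The double broom: a path with `p` vertices (`Sum.inl 0, …, Sum.inl (p-1)`) with `m`
pendant leaves attached to each of its two endpoints (`Sum.inr (Sum.inl _)` at the
endpoint `Sum.inl 0`, and `Sum.inr (Sum.inr _)` at the endpoint `Sum.inl (p-1)`).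
For `i ∈ {0,1}`, the tree `T_i(k)` of the paper is `doubleBroom (k+3-i) m`. -/
def doubleBroom (p m : ℕ) : SimpleGraph (Fin p ⊕ (Fin m ⊕ Fin m)) :=
  SimpleGraph.fromRel fun x y =>
    match x, y with
    | Sum.inl a, Sum.inl b => (b : ℕ) = (a : ℕ) + 1
    | Sum.inl a, Sum.inr (Sum.inl _) => (a : ℕ) = 0
    | Sum.inl a, Sum.inr (Sum.inr _) => (a : ℕ) = p - 1
    | _, _ => False

/-- The tree `T(k)` of the paper: `T₁(k) = doubleBroom (k+2) m` with `m` further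
pendant leaves attached to one of its leaves (namely the pendant leaf
`Sum.inr (Sum.inr 0)`). -/
def broomExt (k m : ℕ) : SimpleGraph ((Fin (k + 2) ⊕ (Fin m ⊕ Fin m)) ⊕ Fin m) :=
  SimpleGraph.fromRel fun x y =>
    match x, y with
    | Sum.inl a, Sum.inl b => (doubleBroom (k + 2) m).Adj a b
    | Sum.inl (Sum.inr (Sum.inr l)), Sum.inr _ => (l : ℕ) = 0
    | _, _ => False

/-!
An injective homomorphism from a connected graph into a tree preserves all distances, since it
maps shortest paths to paths and paths in a tree are shortest. So for universality it suffices to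
find `T₀(k)` and `T₁(k)` as subgraphs of `T(k)`: `T₁(k)` is one by construction, and `T₀(k)` is
obtained by sending the last path vertex to the leaf carrying the extra leaves and its right
pendant leaves to the extra leaves.

For the lower bound, let `A` and `B` be the images of `T₀(k)` and `T₁(k)` in a tree. If `A ∩ B`
contained a left and a right pendant leaf of `T₀(k)`, these would be at distance `k + 4` both in
`T₀(k)` and in the tree, hence also in `T₁(k)`, whose diameter is only `k + 3`. So `A ∩ B` misses
all left or all right pendant leaves of `T₀(k)`, `|A ∩ B| ≤ k + 3 + m`, and
`|A ∪ B| ≥ (k + 3 + 2m) + (k + 2 + 2m) - (k + 3 + m) = |V(T₁(k))| + m`.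
-/

namespace SimpleGraph

variable {V W : Type*} {G : SimpleGraph V} {H : SimpleGraph W}

theorem isAcyclic_of_unique_lower_neighbor (ρ : V → ℕ) (par : V → V)
    (h : ∀ u v, G.Adj u v → ρ v ≤ ρ u → v = par u) : G.IsAcyclic := by
  classical
  intro v c hc
  -- a vertex of maximal rank on a cycle has two distinct neighbours on it, both its parent
  obtain ⟨x, hx, hmax⟩ := c.support.toFinset.exists_max_image ρ ⟨v, by simp⟩
  rw [List.mem_toFinset] at hx
  have hc' := hc.rotate hx
  have hle : ∀ y ∈ (c.rotate x hx).support, ρ y ≤ ρ x := fun y hy =>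
    hmax y (List.mem_toFinset.2 ((c.mem_support_rotate_iff x hx).1 hy))
  apply hc'.snd_ne_penultimate
  rw [h _ _ (Walk.adj_snd hc'.not_nil) (hle _ (Walk.getVert_mem_support _ _)),
    h _ _ (Walk.adj_penultimate hc'.not_nil).symm (hle _ (Walk.getVert_mem_support _ _))]

theorem IsAcyclic.edist_eq_length (hG : G.IsAcyclic) {u v : V} {p : G.Walk u v}
    (hp : p.IsPath) : G.edist u v = p.length := by
  obtain ⟨q, hq, hlen⟩ := p.reachable.exists_path_of_dist
  obtain rfl : p = q := congrArg Subtype.val ((hG.subsingleton_path u v).elim ⟨p, hp⟩ ⟨q, hq⟩)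
  rw [hlen, p.reachable.coe_dist_eq_edist]

theorem IsAcyclic.edist_map_eq (hH : H.IsAcyclic) (f : G →g H) (hf : Function.Injective f)
    {u v : V} (h : G.Reachable u v) : H.edist (f u) (f v) = G.edist u v := by
  obtain ⟨p, hp, hlen⟩ := h.exists_path_of_dist
  rw [hH.edist_eq_length (hp.map hf), Walk.length_map, hlen, h.coe_dist_eq_edist]

theorem le_edist_of_adj_le_add_one (f : V → ℕ) (hf : ∀ a b, G.Adj a b → f b ≤ f a + 1)
    (u v : V) : (f v : ℕ∞) ≤ f u + G.edist u v := by
  by_cases huv : G.Reachable u v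
  · obtain ⟨p, hp⟩ := huv.exists_walk_length_eq_edist
    rw [← hp]
    suffices ∀ {a b} (q : G.Walk a b), f b ≤ f a + q.length by exact_mod_cast this p
    intro a b q
    induction q with
    | nil => simp
    | cons hadj q ih => have := hf _ _ hadj; simp only [Walk.length_cons]; omega
  · simp [edist_eq_top_of_not_reachable huv]

theorem fromRel_adj_map {r : V → V → Prop} {f : V → W}
    (h : ∀ a b, r a b → H.Adj (f a) (f b)) {a b : V} (hab : (fromRel r).Adj a b) :
    H.Adj (f a) (f b) :=
  hab.2.elim (h a b) fun hba => (h b a hba).symm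

end SimpleGraph

theorem isKIsometricEmbedding_of_injective {V W : Type} {G : SimpleGraph V}
    {U : SimpleGraph W} (hG : G.Connected) (hU : U.IsAcyclic) (f : G →g U)
    (hf : Function.Injective f) (k : ℕ) :
    IsKIsometricEmbedding k G U f :=
  ⟨hf, fun _ _ => f.map_adj, fun u v _ => (hU.edist_map_eq f hf (hG.preconnected u v)).symm⟩

section DoubleBroom

variable {p m : ℕ}

theorem doubleBroom_adj_spine {a b : Fin p} (h : (b : ℕ) = a + 1) :
    (doubleBroom p m).Adj (.inl a) (.inl b) :=
  ⟨by simp only [ne_eq, Sum.inl.injEq, Fin.ext_iff]; omega, .inl h⟩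

theorem doubleBroom_adj_leftLeaf {a : Fin p} (h : (a : ℕ) = 0) (i : Fin m) :
    (doubleBroom p m).Adj (.inl a) (.inr (.inl i)) :=
  ⟨by simp, .inl h⟩

theorem doubleBroom_adj_rightLeaf {a : Fin p} (h : (a : ℕ) = p - 1) (i : Fin m) :
    (doubleBroom p m).Adj (.inl a) (.inr (.inr i)) :=
  ⟨by simp, .inl h⟩

theorem doubleBroom_edist_inl_le_sub (i j : Fin p) (hij : (i : ℕ) ≤ j) :
    (doubleBroom p m).edist (.inl i) (.inl j) ≤ ((j - i : ℕ) : ℕ∞) := by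
  obtain ⟨d, hd⟩ := Nat.exists_eq_add_of_le hij
  induction d generalizing j with
  | zero => simp [show j = i from Fin.ext (by omega)]
  | succ d ih =>
    let j' : Fin p := ⟨i + d, by omega⟩
    calc (doubleBroom p m).edist (.inl i) (.inl j)
        ≤ (doubleBroom p m).edist (.inl i) (.inl j') +
            (doubleBroom p m).edist (.inl j') (.inl j) := SimpleGraph.edist_triangle
      _ ≤ ((d : ℕ) : ℕ∞) + 1 := by
          gcongr
          · simpa [j'] using ih j' (by simp [j']) rfl
          · exact (edist_eq_one_iff_adj.2
              (doubleBroom_adj_spine (by show (j : ℕ) = i + d + 1; omega))).le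
      _ = ((j - i : ℕ) : ℕ∞) := by rw [hd, Nat.add_sub_cancel_left, Nat.cast_succ]

theorem doubleBroom_edist_inl_le (i j : Fin p) :
    (doubleBroom p m).edist (.inl i) (.inl j) ≤ ((p - 1 : ℕ) : ℕ∞) := by
  rcases le_total (i : ℕ) j with hij | hji
  · exact (doubleBroom_edist_inl_le_sub i j hij).trans (Nat.cast_le.2 (by omega))
  · rw [SimpleGraph.edist_comm]
    exact (doubleBroom_edist_inl_le_sub j i hji).trans (Nat.cast_le.2 (by omega))

theorem doubleBroom_exists_edist_inl_le_one (hp : 0 < p) (x : Fin p ⊕ (Fin m ⊕ Fin m)) :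
    ∃ j : Fin p, (doubleBroom p m).edist x (.inl j) ≤ 1 := by
  rcases x with a | i | i
  · exact ⟨a, by simp⟩
  · exact ⟨⟨0, hp⟩, (edist_eq_one_iff_adj.2 (doubleBroom_adj_leftLeaf rfl i).symm).le⟩
  · exact ⟨⟨p - 1, by omega⟩,
      (edist_eq_one_iff_adj.2 (doubleBroom_adj_rightLeaf rfl i).symm).le⟩

theorem doubleBroom_edist_le (hp : 0 < p) (x y : Fin p ⊕ (Fin m ⊕ Fin m)) :
    (doubleBroom p m).edist x y ≤ ((p + 1 : ℕ) : ℕ∞) := by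
  obtain ⟨i, hi⟩ := doubleBroom_exists_edist_inl_le_one hp x
  obtain ⟨j, hj⟩ := doubleBroom_exists_edist_inl_le_one hp y
  rw [SimpleGraph.edist_comm] at hj
  calc (doubleBroom p m).edist x y
      ≤ (doubleBroom p m).edist x (.inl i) + (doubleBroom p m).edist (.inl i) y :=
        SimpleGraph.edist_triangle
    _ ≤ (doubleBroom p m).edist x (.inl i) +
          ((doubleBroom p m).edist (.inl i) (.inl j) + (doubleBroom p m).edist (.inl j) y) := by
        gcongr
        exact SimpleGraph.edist_triangle
    _ ≤ 1 + (((p - 1 : ℕ) : ℕ∞) + 1) := by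
        gcongr
        exact doubleBroom_edist_inl_le i j
    _ = ((p + 1 : ℕ) : ℕ∞) := by norm_cast; omega

theorem doubleBroom_connected (hp : 0 < p) : (doubleBroom p m).Connected :=
  have : Nonempty (Fin p ⊕ (Fin m ⊕ Fin m)) := ⟨.inl ⟨0, hp⟩⟩
  ⟨fun x y => edist_ne_top_iff_reachable.1 <|
    ne_top_of_le_ne_top (by simp) (doubleBroom_edist_le hp x y)⟩

theorem doubleBroom_le_edist_leaves (i j : Fin m) :
    ((p + 1 : ℕ) : ℕ∞) ≤ (doubleBroom p m).edist (.inr (.inl i)) (.inr (.inr j)) := by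
  let pos : Fin p ⊕ (Fin m ⊕ Fin m) → ℕ
    | .inl a => a + 1
    | .inr (.inl _) => 0
    | .inr (.inr _) => p + 1
  have hpos : ∀ a b, (doubleBroom p m).Adj a b → pos b ≤ pos a + 1 := by
    rintro a b ⟨-, h | h⟩ <;> rcases a with a | a | a <;> rcases b with b | b | b <;>
      simp only [pos] at h ⊢ <;> omega
  simpa [pos] using le_edist_of_adj_le_add_one pos hpos (.inr (.inl i)) (.inr (.inr j))

end DoubleBroom

section BroomExt

variable {k m : ℕ}

theorem broomExt_adj_inl {a b : Fin (k + 2) ⊕ (Fin m ⊕ Fin m)}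
    (h : (doubleBroom (k + 2) m).Adj a b) : (broomExt k m).Adj (.inl a) (.inl b) :=
  ⟨by simpa using h.ne, .inl h⟩

theorem broomExt_adj_inr (i : Fin m) :
    (broomExt k m).Adj (.inl (.inr (.inr ⟨0, i.pos⟩))) (.inr i) :=
  ⟨by simp, .inl rfl⟩

theorem broomExt_connected : (broomExt k m).Connected := by
  let ι : doubleBroom (k + 2) m →g broomExt k m := ⟨Sum.inl, broomExt_adj_inl⟩
  have hreach (a) : (broomExt k m).Reachable (.inl (.inl 0)) (.inl a) :=
    ((doubleBroom_connected (by omega)).preconnected _ a).map ι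
  refine (connected_iff_exists_forall_reachable _).2 ⟨.inl (.inl 0), ?_⟩
  rintro (a | i)
  · exact hreach a
  · exact (hreach _).trans (broomExt_adj_inr i).reachable

theorem broomExt_isAcyclic : (broomExt k m).IsAcyclic := by
  let ρ : (Fin (k + 2) ⊕ (Fin m ⊕ Fin m)) ⊕ Fin m → ℕ
    | .inl (.inl j) => j
    | .inl (.inr (.inl _)) => 1
    | .inl (.inr (.inr _)) => k + 2
    | .inr _ => k + 3
  let par : (Fin (k + 2) ⊕ (Fin m ⊕ Fin m)) ⊕ Fin m → (Fin (k + 2) ⊕ (Fin m ⊕ Fin m)) ⊕ Fin m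
    | .inl (.inl j) => .inl (.inl ⟨j - 1, by omega⟩)
    | .inl (.inr (.inl _)) => .inl (.inl ⟨0, by omega⟩)
    | .inl (.inr (.inr _)) => .inl (.inl ⟨k + 1, by omega⟩)
    | .inr i => .inl (.inr (.inr ⟨0, i.pos⟩))
  refine isAcyclic_of_unique_lower_neighbor ρ par ?_
  rintro ((a | a | a) | a) ((b | b | b) | b) ⟨-, h | h⟩ hρ <;>
    simp only [doubleBroom, fromRel_adj, ρ, par, ne_eq, Sum.inl.injEq, Sum.inr.injEq,
      reduceCtorEq, Fin.ext_iff, or_false, false_or, and_false] at h hρ ⊢ <;>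
    omega

theorem broomExt_isTree : (broomExt k m).IsTree :=
  ⟨broomExt_connected, broomExt_isAcyclic⟩

def doubleBroomToBroomExt (hm : 0 < m) :
    Fin (k + 3) ⊕ (Fin m ⊕ Fin m) → (Fin (k + 2) ⊕ (Fin m ⊕ Fin m)) ⊕ Fin m
  | .inl j => if h : (j : ℕ) < k + 2 then .inl (.inl ⟨j, h⟩) else .inl (.inr (.inr ⟨0, hm⟩))
  | .inr (.inl i) => .inl (.inr (.inl i))
  | .inr (.inr i) => .inr i

theorem doubleBroomToBroomExt_adj (hm : 0 < m) {a b : Fin (k + 3) ⊕ (Fin m ⊕ Fin m)}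
    (hab : (doubleBroom (k + 3) m).Adj a b) :
    (broomExt k m).Adj (doubleBroomToBroomExt hm a) (doubleBroomToBroomExt hm b) := by
  refine fromRel_adj_map (fun a b h => ?_) hab
  rcases a with a | a | a <;> rcases b with b | b | b <;> simp only at h
  · have ha : (a : ℕ) < k + 2 := by omega
    by_cases hb : (b : ℕ) < k + 2
    · simp only [doubleBroomToBroomExt, dif_pos ha, dif_pos hb]
      exact broomExt_adj_inl (doubleBroom_adj_spine h)
    · simp only [doubleBroomToBroomExt, dif_pos ha, dif_neg hb]
      exact broomExt_adj_inl (doubleBroom_adj_rightLeaf (by show (a : ℕ) = k + 2 - 1; omega) _)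
  · simp only [doubleBroomToBroomExt, dif_pos (show (a : ℕ) < k + 2 by omega)]
    exact broomExt_adj_inl
      (doubleBroom_adj_leftLeaf (show ((⟨a, _⟩ : Fin (k + 2)) : ℕ) = 0 from h) _)
  · simp only [doubleBroomToBroomExt, dif_neg (show ¬(a : ℕ) < k + 2 by omega)]
    exact broomExt_adj_inr b

theorem doubleBroomToBroomExt_injective (hm : 0 < m) :
    Function.Injective (doubleBroomToBroomExt (k := k) hm) := by
  rintro (a | a | a) (b | b | b) h <;> simp only [doubleBroomToBroomExt] at h <;>
    (try split_ifs at h) <;>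
    simp only [Sum.inl.injEq, Sum.inr.injEq, reduceCtorEq, Fin.ext_iff] at h ⊢ <;> omega

theorem broomExt_isKIsoUniversalPair (hm : 0 < m) :
    IsKIsoUniversalPair k (doubleBroom (k + 3) m) (doubleBroom (k + 2) m) (broomExt k m) :=
  ⟨⟨_, isKIsometricEmbedding_of_injective (doubleBroom_connected (by omega)) broomExt_isAcyclic
      ⟨_, doubleBroomToBroomExt_adj hm⟩ (doubleBroomToBroomExt_injective hm) k⟩,
    ⟨_, isKIsometricEmbedding_of_injective (doubleBroom_connected (by omega)) broomExt_isAcyclic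
      ⟨Sum.inl, broomExt_adj_inl⟩ Sum.inl_injective k⟩⟩

end BroomExt

section LowerBound

variable {X : Type*} {S : SimpleGraph X} {p m : ℕ}

theorem doubleBroom_leaves_not_mem_range (hp : 0 < p) (hS : S.IsAcyclic)
    (φ₀ : doubleBroom (p + 1) m →g S) (hφ₀ : Function.Injective φ₀)
    (φ₁ : doubleBroom p m →g S) (hφ₁ : Function.Injective φ₁) (i j : Fin m) :
    ¬ (φ₀ (.inr (.inl i)) ∈ Set.range φ₁ ∧ φ₀ (.inr (.inr j)) ∈ Set.range φ₁) := by
  rintro ⟨⟨u, hu⟩, ⟨v, hv⟩⟩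
  have hlong := doubleBroom_le_edist_leaves (p := p + 1) (m := m) i j
  have hshort := doubleBroom_edist_le (m := m) hp u v
  rw [← hS.edist_map_eq φ₁ hφ₁ ((doubleBroom_connected hp).preconnected u v), hu, hv,
    hS.edist_map_eq φ₀ hφ₀ ((doubleBroom_connected (by omega)).preconnected _ _)] at hshort
  have := Nat.cast_le.1 (hlong.trans hshort)
  omega

theorem ncard_le_of_not_leaves_mem (C : Set (Fin p ⊕ (Fin m ⊕ Fin m)))
    (hC : ∀ i j, ¬ (.inr (.inl i) ∈ C ∧ .inr (.inr j) ∈ C)) : C.ncard ≤ p + m := by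
  suffices ∃ f : Fin p ⊕ Fin m → Fin p ⊕ (Fin m ⊕ Fin m), f.Injective ∧ C ⊆ Set.range f by
    obtain ⟨f, hf, hCf⟩ := this
    calc C.ncard ≤ (Set.range f).ncard := Set.ncard_le_ncard hCf
      _ = p + m := by rw [Set.ncard_range_of_injective hf]; simp
  by_cases hL : ∃ i, .inr (.inl i) ∈ C
  · obtain ⟨i, hi⟩ := hL
    refine ⟨Sum.map id Sum.inl,
      Sum.map_injective.2 ⟨Function.injective_id, Sum.inl_injective⟩, ?_⟩
    rintro (a | a | a) ha
    · exact ⟨.inl a, rfl⟩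
    · exact ⟨.inr a, rfl⟩
    · exact absurd ⟨hi, ha⟩ (hC i a)
  · refine ⟨Sum.map id Sum.inr,
      Sum.map_injective.2 ⟨Function.injective_id, Sum.inr_injective⟩, ?_⟩
    rintro (a | a | a) ha
    · exact ⟨.inl a, rfl⟩
    · exact absurd ⟨a, ha⟩ hL
    · exact ⟨.inr a, rfl⟩

theorem card_add_le_of_doubleBroom_pair [Finite X] (hp : 0 < p) (hS : S.IsAcyclic)
    (φ₀ : doubleBroom (p + 1) m →g S) (hφ₀ : Function.Injective φ₀)
    (φ₁ : doubleBroom p m →g S) (hφ₁ : Function.Injective φ₁) :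
    Nat.card (Fin p ⊕ (Fin m ⊕ Fin m)) + m ≤ Nat.card X := by
  set A := Set.range φ₀
  set B := Set.range φ₁
  have hA : A.ncard = p + 1 + (m + m) := by simp [A, Set.ncard_range_of_injective hφ₀]
  have hB : B.ncard = p + (m + m) := by simp [B, Set.ncard_range_of_injective hφ₁]
  have hAB : (A ∩ B).ncard ≤ p + 1 + m := by
    rw [← Set.image_preimage_eq_range_inter, Set.ncard_image_of_injective _ hφ₀]
    exact ncard_le_of_not_leaves_mem _ (doubleBroom_leaves_not_mem_range hp hS φ₀ hφ₀ φ₁ hφ₁)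
  have hX := Set.ncard_le_card (A ∪ B)
  have := Set.ncard_union_add_ncard_inter A B
  simp only [Nat.card_sum, Nat.card_fin]
  omega

end LowerBound

/-- With `n ≥ 8`, `0 ≤ k ≤ n - 7` and `m = ⌊(n-k-3)/2⌋`, the tree
`T(k)` is a `k`-isometric-universal tree for `{T₀(k), T₁(k)}`, and every
`k`-isometric-universal tree for this pair has at least `|V(T₁(k))| + m` vertices
(in particular `T(k)` is a minimum `k`-isometric-universal tree for this pair). -/
theorem stmt_12 (n k : ℕ) (hn : 8 ≤ n) (hk : k ≤ n - 7) (m : ℕ)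
    (hm : m = (n - k - 3) / 2) :
    (broomExt k m).IsTree ∧
    IsKIsoUniversalPair k (doubleBroom (k + 3) m) (doubleBroom (k + 2) m)
      (broomExt k m) ∧
    ∀ (X : Type) (_ : Finite X) (S : SimpleGraph X), S.IsTree →
      IsKIsoUniversalPair k (doubleBroom (k + 3) m) (doubleBroom (k + 2) m) S →
      Nat.card (Fin (k + 2) ⊕ (Fin m ⊕ Fin m)) + m ≤ Nat.card X := by
  have hm0 : 0 < m := by omega
  refine ⟨broomExt_isTree, broomExt_isKIsoUniversalPair hm0, ?_⟩
  rintro X _ S hS ⟨⟨φ₀, hφ₀, hadj₀, -⟩, ⟨φ₁, hφ₁, hadj₁, -⟩⟩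
  exact card_add_le_of_doubleBroom_pair (by omega) hS.isAcyclic
    ⟨φ₀, hadj₀ _ _⟩ hφ₀ ⟨φ₁, hadj₁ _ _⟩ hφ₁
end

section
/- Let A1 and A2 be trees that are isometric subgraphs of a graph U with U = A1 ∪ A2 (every vertex and edge of U belongs to A1 or to A2), and suppose U contains a cycle; let C be a shortest cycle of U. Then the edges of C can be partitioned into two paths P1 and P2 sharing exactly two vertices u and v, such that u, v ∈ V(A1) ∩ V(A2), every vertex and edge of P1 other than u and v belongs to A1 but not to A2, every vertex and edge of P2 other than u and v belongs to A2 but not to A1, and P1 and P2 both have length dist_U(u,v) (so C has length 2·dist_U(u,v)). -/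
/-!
Isometric subgraphs are induced, so the shortest cycle `C` lies in neither tree. Take the maximal
arc `P` of `C` inside `A₁` through a vertex `b ∉ A₂`, and let `Q` be the complementary arc; its
first and last edges leave `A₁`.

The basic estimate: if a path `W` has both ends in an isometric subgraph `A` but passes outside
`A`, then `W` and a geodesic of `A` between its ends are distinct paths, whose union contains a
cycle, so `girth ≤ 2 |W|`. Applied to the two pieces of `Q` at an inner vertex in `A₁`, it gives
`girth ≤ |Q| < |C|`; hence `Q` lies in `A₂`. A path inside an isometric tree is a geodesic, so
`|P| = |Q| = dist(u, v)` and `|C| = 2 |P|`. Applied to the two pieces of `P` at an inner vertex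
in `A₂`, one of which contains `b`, the estimate contradicts `|P| = girth / 2`.
-/

namespace SimpleGraph

variable {V : Type*} {G : SimpleGraph V}

namespace Walk

lemma IsCycle.append_comm {u v : V} {p : G.Walk u v} {q : G.Walk v u}
    (h : (p.append q).IsCycle) : (q.append p).IsCycle := by
  rw [isCycle_def, isTrail_def, edges_append, tail_support_append] at h ⊢
  refine ⟨List.nodup_append_comm.mp h.1, ?_, List.nodup_append_comm.mp h.2.2⟩
  rw [Ne, eq_nil_iff_nil, nil_append_iff] at h ⊢
  exact fun hnil => h.2.1 hnil.symm

lemma exists_eq_append_cons_of_mem_of_notMem {S : Set V} {a b : V} (W : G.Walk a b)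
    (ha : a ∈ S) (hb : b ∉ S) :
    ∃ (c d : V) (W₁ : G.Walk a c) (h : G.Adj c d) (W₂ : G.Walk d b),
      W = W₁.append (cons h W₂) ∧ (∀ y ∈ W₁.support, y ∈ S) ∧ d ∉ S := by
  induction W with
  | nil => exact absurd ha hb
  | @cons a c b h W ih =>
    by_cases hc : c ∈ S
    · obtain ⟨c', d, W₁, h', W₂, rfl, hW₁, hd⟩ := ih hc hb
      refine ⟨c', d, cons h W₁, h', W₂, rfl, ?_, hd⟩
      simp only [support_cons, List.mem_cons]
      rintro y (rfl | hy)
      exacts [ha, hW₁ y hy]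
    · exact ⟨a, c, nil, h, W, rfl, by simpa using ha, hc⟩

/-- `P` is the maximal arc of `c` inside `S` through `b`: the complementary arc `Q` leaves `S`
right after each of its ends. -/
lemma IsCycle.exists_maximal_arc {S : Set V} {x : V} {c : G.Walk x x} (hc : c.IsCycle)
    {a b : V} (ha : a ∈ c.support) (haS : a ∉ S) (hb : b ∈ c.support) (hbS : b ∈ S) :
    ∃ (u v : V) (P Q : G.Walk u v), (P.append Q.reverse).IsCycle ∧
      (P.edges ++ Q.edges).Perm c.edges ∧ (∀ y ∈ P.support, y ∈ S) ∧ b ∈ P.support ∧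
      Q.snd ∉ S ∧ Q.penultimate ∉ S := by
  classical
  set c' := c.rotate a ha
  have hb' : b ∈ c'.support := (mem_support_rotate_iff c a ha).mpr hb
  obtain ⟨v, v₁, Y, hvv₁, Y', hY, hYS, hv₁⟩ :=
    exists_eq_append_cons_of_mem_of_notMem (c'.dropUntil b hb') hbS haS
  obtain ⟨u, u₁, X, huu₁, X', hX, hXS, hu₁⟩ :=
    exists_eq_append_cons_of_mem_of_notMem (c'.takeUntil b hb').reverse hbS haS
  set P := X.reverse.append Y
  set Q := (cons huu₁ X').append (cons hvv₁ Y').reverse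
  have hc' : c' = (cons huu₁ X').reverse.append (P.append (cons hvv₁ Y')) := by
    rw [← take_spec c' hb', ← reverse_reverse (c'.takeUntil b hb'), hX, hY]
    simp only [P, reverse_append, append_assoc]
  have hPQ : P.append Q.reverse =
      (P.append (cons hvv₁ Y')).append (cons huu₁ X').reverse := by
    simp only [Q, reverse_append, reverse_reverse, append_assoc]
  refine ⟨u, v, P, Q, ?_, ?_, ?_, ?_, ?_, ?_⟩
  · have hc'cyc : c'.IsCycle := hc.rotate ha
    rw [hc'] at hc'cyc
    exact hPQ ▸ hc'cyc.append_comm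
  · have hrev : (P.edges ++ Q.edges).Perm (P.append Q.reverse).edges := by
      rw [edges_append P, edges_reverse]
      exact (List.reverse_perm _).symm.append_left _
    have hswap : (P.append Q.reverse).edges.Perm c'.edges := by
      rw [hPQ, hc', edges_append (P.append _), edges_append (cons huu₁ X').reverse]
      exact List.perm_append_comm
    exact hrev.trans (hswap.trans (rotate_edges c a ha).perm)
  · intro y hy
    rw [mem_support_append_iff, support_reverse, List.mem_reverse] at hy
    exact hy.elim (hXS y) (hYS y)
  · exact (mem_support_append_iff _ _).mpr (Or.inl X.reverse.end_mem_support)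
  · simpa [Q] using hu₁
  · simpa [Q, ← snd_reverse] using hv₁

lemma penultimate_dropUntil [DecidableEq V] {u v w : V} {p : G.Walk u v} (h : w ∈ p.support)
    (hwv : w ≠ v) : (p.dropUntil w h).penultimate = p.penultimate := by
  have hlen : (p.takeUntil w h).length + (p.dropUntil w h).length = p.length := by
    rw [← length_append, take_spec]
  have hlt := length_takeUntil_lt_length h hwv
  conv_rhs => rw [← p.take_spec h]
  rw [penultimate, penultimate, getVert_append, length_append, if_neg (by omega)]
  congr 1
  omega

lemma isPath_of_length_eq_edist {u v : V} (p : G.Walk u v)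
    (hp : (p.length : ℕ∞) = G.edist u v) : p.IsPath :=
  p.isPath_of_length_eq_dist <| by
    exact_mod_cast hp.trans (Reachable.coe_dist_eq_edist ⟨p⟩).symm

lemma IsCycle.girth_eq_length {x : V} {C : G.Walk x x} (hC : C.IsCycle)
    (hmin : ∀ (y : V) (C' : G.Walk y y), C'.IsCycle → C.length ≤ C'.length) :
    G.girth = C.length := by
  obtain ⟨y, C', hC', hlen⟩ := exists_girth_eq_length.mpr fun hacyc => hacyc C hC
  exact le_antisymm (girth_le_length hC) (hlen ▸ hmin y C' hC')

end Walk

namespace Subgraph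

def IsIsometric (H : G.Subgraph) : Prop :=
  ∀ u v : H.verts, H.coe.edist u v = G.edist u.val v.val

variable {H : G.Subgraph}

lemma IsIsometric.isInduced (hH : H.IsIsometric) : H.IsInduced := by
  intro p hp q hq hpq
  have h := hH ⟨p, hp⟩ ⟨q, hq⟩
  rw [edist_eq_one_iff_adj.mpr hpq, edist_eq_one_iff_adj] at h
  exact h

lemma IsInduced.exists_notMem_verts_of_isCycle (hH : H.IsInduced) (hacyc : H.coe.IsAcyclic)
    {x : V} {c : G.Walk x x} (hc : c.IsCycle) : ∃ y ∈ c.support, y ∉ H.verts := by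
  by_contra! hs
  let φ : G.induce H.verts →g H.coe := ⟨id, fun {x y} h => hH x.2 y.2 h⟩
  have hcyc : (c.induce H.verts hs).IsCycle :=
    Walk.IsCycle.of_map (f := (Embedding.induce H.verts).toHom) (by rwa [Walk.map_induce])
  exact hacyc _ ((Walk.isCycle_map_iff_of_injective (f := φ) Function.injective_id).mpr hcyc)

lemma IsInduced.mem_edgeSet_of_mem_edges (hH : H.IsInduced) {u v : V} {W : G.Walk u v}
    (hs : ∀ y ∈ W.support, y ∈ H.verts) {e : Sym2 V} (he : e ∈ W.edges) : e ∈ H.edgeSet := by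
  induction e using Sym2.ind with
  | _ x y =>
    exact hH (hs x (W.fst_mem_support_of_mem_edges he))
      (hs y (W.snd_mem_support_of_mem_edges he)) (W.adj_of_mem_edges he)

lemma notMem_edgeSet_of_mem_edges {u v : V} {P : G.Walk u v} (hP : P.IsPath)
    (hlen : P.length ≠ 1) (hint : ∀ w ∈ P.support, w ≠ u → w ≠ v → w ∉ H.verts)
    {e : Sym2 V} (he : e ∈ P.edges) : e ∉ H.edgeSet := by
  induction e using Sym2.ind with
  | _ x y =>
    intro hxy
    have hx := hint x (P.fst_mem_support_of_mem_edges he)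
    have hy := hint y (P.snd_mem_support_of_mem_edges he)
    have hne : x ≠ y := (P.adj_of_mem_edges he).ne
    have huv : s(u, v) ∈ P.edges := by
      have := hxy.fst_mem
      have := hxy.snd_mem
      by_cases hxu : x = u <;> by_cases hyv : y = v <;> simp_all [Sym2.eq_swap]
    exact hlen (hP.length_eq_one_of_mem_edges huv)

lemma IsIsometric.exists_isPath_length_eq_edist (hH : H.IsIsometric) {a b : V}
    (ha : a ∈ H.verts) (hb : b ∈ H.verts) (hab : G.Reachable a b) :
    ∃ T : G.Walk a b, T.IsPath ∧ (T.length : ℕ∞) = G.edist a b ∧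
      ∀ y ∈ T.support, y ∈ H.verts := by
  have hr : H.coe.Reachable ⟨a, ha⟩ ⟨b, hb⟩ := by
    rw [← edist_ne_top_iff_reachable, hH]
    exact edist_ne_top_iff_reachable.mpr hab
  obtain ⟨p, hp⟩ := hr.exists_walk_length_eq_edist
  have hlen : ((p.map H.hom).length : ℕ∞) = G.edist a b := by
    rw [Walk.length_map, hp, hH]
  refine ⟨p.map H.hom, Walk.isPath_of_length_eq_edist _ hlen, hlen, fun y hy => ?_⟩
  obtain ⟨y', -, rfl⟩ := List.mem_map.mp (Walk.support_map H.hom p ▸ hy)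
  exact y'.property

lemma IsIsometric.length_eq_edist_of_isPath (hH : H.IsIsometric) (hacyc : H.coe.IsAcyclic)
    {a b : V} {W : G.Walk a b} (hW : W.IsPath) (hs : ∀ y ∈ W.support, y ∈ H.verts) :
    (W.length : ℕ∞) = G.edist a b := by
  obtain ⟨T, hT, hTlen, hTs⟩ := hH.exists_isPath_length_eq_edist
    (hs a W.start_mem_support) (hs b W.end_mem_support) ⟨W⟩
  suffices W = T from this ▸ hTlen
  by_contra hne
  obtain ⟨_, -, -, c, hc, hsub⟩ := hW.exists_isCycle_sublist_of_ne hT hne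
  obtain ⟨z, hz, hzH⟩ := hH.isInduced.exists_notMem_verts_of_isCycle hacyc hc
  rcases List.mem_append.mp (hsub.subset hz) with hz | hz
  · exact hzH (hs z hz)
  · exact hzH (hTs z (List.mem_reverse.mp (List.mem_of_mem_tail hz)))

lemma IsIsometric.girth_le_two_mul_length (hH : H.IsIsometric) {a b : V} {W : G.Walk a b}
    (hW : W.IsPath) (ha : a ∈ H.verts) (hb : b ∈ H.verts) {z : V} (hz : z ∈ W.support)
    (hzH : z ∉ H.verts) : G.girth ≤ 2 * W.length := by
  obtain ⟨T, hT, hTlen, hTs⟩ := hH.exists_isPath_length_eq_edist ha hb ⟨W⟩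
  have hne : W ≠ T := by
    rintro rfl
    exact hzH (hTs z hz)
  obtain ⟨_, -, -, c, hc, hclen⟩ := hW.exists_isCycle_length_le_add_of_ne hT hne
  have hTW : T.length ≤ W.length := by exact_mod_cast hTlen ▸ edist_le W
  have := girth_le_length hc
  omega

lemma IsIsometric.notMem_verts_of_two_mul_length_le_girth (hH : H.IsIsometric) {u v : V}
    {P : G.Walk u v} (hP : P.IsPath) (hu : u ∈ H.verts) (hv : v ∈ H.verts) {z : V}
    (hz : z ∈ P.support) (hzH : z ∉ H.verts) (hlen : 2 * P.length ≤ G.girth) :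
    ∀ w ∈ P.support, w ≠ u → w ≠ v → w ∉ H.verts := by
  classical
  intro w hw hwu hwv hwH
  have hz' : z ∈ (P.takeUntil w hw).support ∨ z ∈ (P.dropUntil w hw).support := by
    rw [← Walk.mem_support_append_iff, P.take_spec hw]
    exact hz
  rcases hz' with hz' | hz'
  · have := hH.girth_le_two_mul_length (hP.takeUntil hw) hu hwH hz' hzH
    have := Walk.length_takeUntil_lt_length hw hwv
    omega
  · have := hH.girth_le_two_mul_length (hP.dropUntil hw) hwH hv hz' hzH
    have := Walk.length_dropUntil_lt_length hw hwu
    omega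

lemma IsIsometric.notMem_verts_of_length_lt_girth (hH : H.IsIsometric) {u v : V}
    {Q : G.Walk u v} (hQ : Q.IsPath) (hu : u ∈ H.verts) (hv : v ∈ H.verts)
    (hsnd : Q.snd ∉ H.verts) (hpen : Q.penultimate ∉ H.verts) (hlen : Q.length < G.girth) :
    ∀ w ∈ Q.support, w ≠ u → w ≠ v → w ∉ H.verts := by
  classical
  intro w hw hwu hwv hwH
  have hsnd' : Q.snd ∈ (Q.takeUntil w hw).support := by
    rw [← Walk.snd_takeUntil hwu]
    exact Walk.getVert_mem_support _ _
  have hpen' : Q.penultimate ∈ (Q.dropUntil w hw).support := by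
    rw [← Walk.penultimate_dropUntil hw hwv]
    exact Walk.getVert_mem_support _ _
  have h₁ := hH.girth_le_two_mul_length (hQ.takeUntil hw) hu hwH hsnd' hsnd
  have h₂ := hH.girth_le_two_mul_length (hQ.dropUntil hw) hwH hv hpen' hpen
  have hsum : (Q.takeUntil w hw).length + (Q.dropUntil w hw).length = Q.length := by
    rw [← Walk.length_append, Q.take_spec hw]
  omega

section Cover

variable {A₁ A₂ : G.Subgraph}

lemma mem_verts_right_of_sup_eq_top (hcover : A₁ ⊔ A₂ = ⊤) {p : V} (hp : p ∉ A₁.verts) :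
    p ∈ A₂.verts := by
  have : p ∈ (A₁ ⊔ A₂).verts := hcover ▸ Set.mem_univ p
  exact this.resolve_left hp

lemma mem_verts_right_of_adj_of_sup_eq_top (hcover : A₁ ⊔ A₂ = ⊤) {p q : V} (hpq : G.Adj p q)
    (hq : q ∉ A₁.verts) : p ∈ A₂.verts := by
  have : (A₁ ⊔ A₂).Adj p q := hcover ▸ hpq
  exact (this.resolve_left fun h => hq h.snd_mem).fst_mem

lemma forall_mem_verts_right_of_sup_eq_top (hcover : A₁ ⊔ A₂ = ⊤) {u v : V}
    {W : G.Walk u v} (hu : u ∈ A₂.verts) (hv : v ∈ A₂.verts)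
    (hint : ∀ w ∈ W.support, w ≠ u → w ≠ v → w ∉ A₁.verts) :
    ∀ w ∈ W.support, w ∈ A₂.verts := by
  intro w hw
  rcases eq_or_ne w u with rfl | hwu
  · exact hu
  rcases eq_or_ne w v with rfl | hwv
  · exact hv
  exact mem_verts_right_of_sup_eq_top hcover (hint w hw hwu hwv)

lemma exists_maximal_arc_of_sup_eq_top (hcover : A₁ ⊔ A₂ = ⊤) (h₁ : A₁.IsInduced)
    (h₁acyc : A₁.coe.IsAcyclic) (h₂ : A₂.IsInduced) (h₂acyc : A₂.coe.IsAcyclic) {x : V}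
    {C : G.Walk x x} (hC : C.IsCycle) :
    ∃ (u v : V) (P Q : G.Walk u v) (b : V), u ≠ v ∧ P.IsPath ∧ Q.IsPath ∧
      (P.edges ++ Q.edges).Perm C.edges ∧ (∀ y ∈ P.support, y ∈ A₁.verts) ∧
      b ∈ P.support ∧ b ∉ A₂.verts ∧ u ∈ A₂.verts ∧ v ∈ A₂.verts ∧
      Q.snd ∉ A₁.verts ∧ Q.penultimate ∉ A₁.verts := by
  obtain ⟨a, haC, ha₁⟩ := h₁.exists_notMem_verts_of_isCycle h₁acyc hC
  obtain ⟨b, hbC, hb₂⟩ := h₂.exists_notMem_verts_of_isCycle h₂acyc hC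
  have hb₁ : b ∈ A₁.verts := by_contra fun h => hb₂ (mem_verts_right_of_sup_eq_top hcover h)
  obtain ⟨u, v, P, Q, hcyc, hperm, hP₁, hbP, hsnd, hpen⟩ := hC.exists_maximal_arc haC ha₁ hbC hb₁
  have hQnil : ¬ Q.Nil := by
    intro h
    rw [Walk.snd, Q.getVert_of_length_le (by simp [h.length_eq_zero])] at hsnd
    exact hsnd (hP₁ v P.end_mem_support)
  have hu₂ := mem_verts_right_of_adj_of_sup_eq_top hcover (Q.adj_snd hQnil) hsnd
  have hPnil : ¬ P.Nil := by
    intro h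
    obtain rfl := h.eq
    obtain rfl : b = u := by simpa [h.eq_nil] using hbP
    exact hb₂ hu₂
  have hP : P.IsPath := hcyc.isPath_of_append_left (by simpa using hQnil)
  have huv : u ≠ v := by
    rintro rfl
    exact hPnil (Walk.isPath_iff_nil.mp hP)
  exact ⟨u, v, P, Q, b, huv, hP, Walk.isPath_reverse_iff Q |>.mp
    (hcyc.isPath_of_append_right hPnil), hperm, hP₁, hbP, hb₂, hu₂,
    mem_verts_right_of_adj_of_sup_eq_top hcover (Q.adj_penultimate hQnil).symm hpen, hsnd, hpen⟩

end Cover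

lemma forall_mem_and_notMem_of_isPath {A A' : G.Subgraph} (hA : A.IsInduced) {u v : V}
    {P : G.Walk u v} (hP : P.IsPath) (hlen : P.length ≠ 1) (hs : ∀ w ∈ P.support, w ∈ A.verts)
    (hint : ∀ w ∈ P.support, w ≠ u → w ≠ v → w ∉ A'.verts) :
    (∀ w ∈ P.support, w ≠ u → w ≠ v → w ∈ A.verts ∧ w ∉ A'.verts) ∧
      ∀ e ∈ P.edges, e ∈ A.edgeSet ∧ e ∉ A'.edgeSet :=
  ⟨fun w hw hwu hwv => ⟨hs w hw, hint w hw hwu hwv⟩,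
    fun _ he => ⟨hA.mem_edgeSet_of_mem_edges hs he, notMem_edgeSet_of_mem_edges hP hlen hint he⟩⟩

end Subgraph

end SimpleGraph

open SimpleGraph Subgraph

theorem stmt_15_general {V : Type} (U : SimpleGraph V) (A₁ A₂ : U.Subgraph)
    (h₁tree : A₁.coe.IsTree) (h₂tree : A₂.coe.IsTree)
    (h₁iso : ∀ u v : A₁.verts, A₁.coe.edist u v = U.edist u.val v.val)
    (h₂iso : ∀ u v : A₂.verts, A₂.coe.edist u v = U.edist u.val v.val)
    (hcover : A₁ ⊔ A₂ = ⊤)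
    (x : V) (C : U.Walk x x) (hC : C.IsCycle)
    (hCmin : ∀ (y : V) (C' : U.Walk y y), C'.IsCycle → C.length ≤ C'.length) :
    ∃ (u v : V) (P₁ P₂ : U.Walk u v), u ≠ v ∧ P₁.IsPath ∧ P₂.IsPath ∧
      (∀ e, e ∈ C.edges ↔ (e ∈ P₁.edges ∨ e ∈ P₂.edges)) ∧
      (∀ e, e ∈ P₁.edges → e ∉ P₂.edges) ∧
      (∀ w, w ∈ P₁.support → w ∈ P₂.support → w = u ∨ w = v) ∧
      u ∈ A₁.verts ∧ u ∈ A₂.verts ∧ v ∈ A₁.verts ∧ v ∈ A₂.verts ∧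
      (∀ w ∈ P₁.support, w ≠ u → w ≠ v → w ∈ A₁.verts ∧ w ∉ A₂.verts) ∧
      (∀ e ∈ P₁.edges, e ∈ A₁.edgeSet ∧ e ∉ A₂.edgeSet) ∧
      (∀ w ∈ P₂.support, w ≠ u → w ≠ v → w ∈ A₂.verts ∧ w ∉ A₁.verts) ∧
      (∀ e ∈ P₂.edges, e ∈ A₂.edgeSet ∧ e ∉ A₁.edgeSet) ∧
      (P₁.length : ℕ∞) = U.edist u v ∧ (P₂.length : ℕ∞) = U.edist u v ∧
      C.length = 2 * P₁.length := by
  have h₁ : A₁.IsIsometric := h₁iso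
  have h₂ : A₂.IsIsometric := h₂iso
  have hgirth := hC.girth_eq_length hCmin
  obtain ⟨u, v, P, Q, b, huv, hP, hQ, hperm, hP₁, hbP, hb₂, hu₂, hv₂, hsnd, hpen⟩ :=
    exists_maximal_arc_of_sup_eq_top hcover h₁.isInduced h₁tree.isAcyclic h₂.isInduced
      h₂tree.isAcyclic hC
  have hu₁ := hP₁ u P.start_mem_support
  have hv₁ := hP₁ v P.end_mem_support
  have hClen : C.length = P.length + Q.length := by
    rw [← Walk.length_edges, ← hperm.length_eq, List.length_append, Walk.length_edges,
      Walk.length_edges]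
  have hPpos := Walk.not_nil_iff_lt_length.mp (Walk.not_nil_of_ne (p := P) huv)
  have hQ₁ := h₁.notMem_verts_of_length_lt_girth hQ hu₁ hv₁ hsnd hpen (by omega)
  have hQ₂ := forall_mem_verts_right_of_sup_eq_top hcover hu₂ hv₂ hQ₁
  have hPlen := h₁.length_eq_edist_of_isPath h₁tree.isAcyclic hP hP₁
  have hQlen := h₂.length_eq_edist_of_isPath h₂tree.isAcyclic hQ hQ₂
  have hPQ : P.length = Q.length := by exact_mod_cast hPlen.trans hQlen.symm
  have hP₂ := h₂.notMem_verts_of_two_mul_length_le_girth hP hu₂ hv₂ hbP hb₂ (by omega)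
  have h3 := hC.three_le_length
  obtain ⟨hPv, hPe⟩ := forall_mem_and_notMem_of_isPath h₁.isInduced hP (by omega) hP₁ hP₂
  obtain ⟨hQv, hQe⟩ := forall_mem_and_notMem_of_isPath h₂.isInduced hQ (by omega) hQ₂ hQ₁
  refine ⟨u, v, P, Q, huv, hP, hQ, fun e => by rw [← hperm.mem_iff, List.mem_append],
    fun e he heQ => (hPe e he).2 (hQe e heQ).1, fun w hwP hwQ => ?_, hu₁, hu₂, hv₁, hv₂,
    hPv, hPe, hQv, hQe, hPlen, hQlen, by omega⟩
  by_contra! h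
  exact (hPv w hwP h.1 h.2).2 (hQv w hwQ h.1 h.2).1

/-- Let `A₁, A₂` be trees that are isometric subgraphs of `U` with
`U = A₁ ∪ A₂`, and let `C` be a shortest cycle of `U`. Then the edges of `C` can be
partitioned into two paths `P₁, P₂` sharing exactly the two vertices `u ≠ v`, with
`u, v ∈ V(A₁) ∩ V(A₂)`, all vertices of `P₁` other than `u, v` and all edges of `P₁`
lying in `A₁` but not in `A₂`, all vertices of `P₂` other than `u, v` and all edges of
`P₂` lying in `A₂` but not in `A₁`, and both `P₁` and `P₂` of length `dist_U(u,v)`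
(so `C` has length `2 · dist_U(u,v)`). -/
theorem stmt_15 {V : Type} [Finite V] (U : SimpleGraph V) (A₁ A₂ : U.Subgraph)
    (h₁tree : A₁.coe.IsTree) (h₂tree : A₂.coe.IsTree)
    (h₁iso : ∀ u v : A₁.verts, A₁.coe.edist u v = U.edist u.val v.val)
    (h₂iso : ∀ u v : A₂.verts, A₂.coe.edist u v = U.edist u.val v.val)
    (hcover : A₁ ⊔ A₂ = ⊤)
    (x : V) (C : U.Walk x x) (hC : C.IsCycle)
    (hCmin : ∀ (y : V) (C' : U.Walk y y), C'.IsCycle → C.length ≤ C'.length) :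
    ∃ (u v : V) (P₁ P₂ : U.Walk u v), u ≠ v ∧ P₁.IsPath ∧ P₂.IsPath ∧
      (∀ e, e ∈ C.edges ↔ (e ∈ P₁.edges ∨ e ∈ P₂.edges)) ∧
      (∀ e, e ∈ P₁.edges → e ∉ P₂.edges) ∧
      (∀ w, w ∈ P₁.support → w ∈ P₂.support → w = u ∨ w = v) ∧
      u ∈ A₁.verts ∧ u ∈ A₂.verts ∧ v ∈ A₁.verts ∧ v ∈ A₂.verts ∧
      (∀ w ∈ P₁.support, w ≠ u → w ≠ v → w ∈ A₁.verts ∧ w ∉ A₂.verts) ∧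
      (∀ e ∈ P₁.edges, e ∈ A₁.edgeSet ∧ e ∉ A₂.edgeSet) ∧
      (∀ w ∈ P₂.support, w ≠ u → w ≠ v → w ∈ A₂.verts ∧ w ∉ A₁.verts) ∧
      (∀ e ∈ P₂.edges, e ∈ A₂.edgeSet ∧ e ∉ A₁.edgeSet) ∧
      (P₁.length : ℕ∞) = U.edist u v ∧ (P₂.length : ℕ∞) = U.edist u v ∧
      C.length = 2 * P₁.length :=
  stmt_15_general U A₁ A₂ h₁tree h₂tree h₁iso h₂iso hcover x C hC hCmin
end
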